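/- Let G be a d-regular simple graph on n vertices with 1 ≤ d ≤ n/2, and suppose the adjacency-matrix eigenvalues λ₁ ≥ λ₂ ≥ ⋯ ≥ λₙ satisfy 0 ≤ λ₂ ≤ √d / 2. Then (1 + λ₂) · |λₙ| ≥ d/4. -/

import Mathlib

/-!
The eigenvalues sum to `tr A = 0`, their squares sum to `tr A² = n d`, and `λ₁ ≤ d`.
With `a = λ₂` and `b = |λₙ|`, every eigenvalue `x` other than `λ₁` lies in `[-b, a]`, so
`x² ≤ (a - b) x + a b`. Summing over these `n - 1` eigenvalues gives
`n d - λ₁² ≤ (b - a) λ₁ + (n - 1) a b`, and `0 ≤ λ₁ ≤ d ≤ n / 2` turns this into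
`(1 + a) b ≥ d / 2`.
-/

open Matrix Finset

namespace Matrix.IsHermitian

variable {𝕜 n : Type*} [RCLike 𝕜] [Fintype n] [DecidableEq n] {A : Matrix n n 𝕜}

theorem trace_mul_self_eq_sum_eigenvalues_sq (hA : A.IsHermitian) :
    (A * A).trace = ∑ i, (hA.eigenvalues i : 𝕜) ^ 2 := by
  conv_lhs => rw [hA.spectral_theorem, ← map_mul, Unitary.conjStarAlgAut_apply, trace_mul_cycle,
    Unitary.coe_star_mul_self, one_mul, diagonal_mul_diagonal, trace_diagonal]
  simp [sq]

end Matrix.IsHermitian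

namespace SimpleGraph

variable {V : Type*} [Fintype V] (G : SimpleGraph V) [DecidableRel G.Adj]

theorem abs_eigenvalues_adjMatrix_le_maxDegree [DecidableEq V]
    (hA : (G.adjMatrix ℝ).IsHermitian) (i : V) : |hA.eigenvalues i| ≤ G.maxDegree := by
  have hv : Module.End.HasEigenvector (toLin' (G.adjMatrix ℝ)) (hA.eigenvalues i)
      (hA.eigenvectorBasis i) :=
    ⟨Module.End.mem_eigenspace_iff.mpr (hA.mulVec_eigenvectorBasis i),
      (WithLp.ofLp_eq_zero 2).ne.2 (hA.eigenvectorBasis.orthonormal.ne_zero i)⟩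
  obtain ⟨k, hk⟩ := eigenvalue_mem_ball (Module.End.hasEigenvalue_of_hasEigenvector hv)
  simp only [Metric.mem_closedBall, Real.dist_eq, adjMatrix_apply, sub_zero, Real.norm_eq_abs,
    apply_ite, abs_one, abs_zero, G.irrefl, if_false] at hk
  rw [sum_erase _ (by simp), sum_boole, ← neighborFinset_eq_filter, card_neighborFinset_eq_degree]
    at hk
  exact hk.trans (mod_cast G.degree_le_maxDegree k)

theorem IsRegularOfDegree.trace_adjMatrix_mul_self {R : Type*} [NonAssocSemiring R] {d : ℕ}
    (hG : G.IsRegularOfDegree d) :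
    (G.adjMatrix R * G.adjMatrix R).trace = Fintype.card V * d := by
  simp only [trace, Matrix.diag, adjMatrix_mul_self_apply_self, hG _, sum_const, card_univ,
    nsmul_eq_mul]

end SimpleGraph

theorem sum_sq_le_of_forall_mem_Icc {ι R : Type*} [CommRing R] [LinearOrder R]
    [IsStrictOrderedRing R] (s : Finset ι) (f : ι → R) {a b : R}
    (h : ∀ i ∈ s, f i ∈ Set.Icc (-b) a) :
    ∑ i ∈ s, f i ^ 2 ≤ (a - b) * ∑ i ∈ s, f i + #s * (a * b) := by
  rw [mul_sum, ← nsmul_eq_mul, ← sum_const, ← sum_add_distrib]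
  refine sum_le_sum fun i hi ↦ ?_
  obtain ⟨hb, ha⟩ := h i hi
  nlinarith [mul_nonneg (sub_nonneg.2 ha) (neg_le_iff_add_nonneg.1 hb)]

theorem Antitone.half_le_one_add_mul_abs_of_sum_eq_zero {n : ℕ} (hn : 1 < n) {d : ℝ}
    {μ : Fin n → ℝ} (hμ : Antitone μ) (hsum : ∑ i, μ i = 0) (hsq : ∑ i, μ i ^ 2 = n * d)
    (hmax : μ ⟨0, by omega⟩ ≤ d) (hdn : d ≤ n / 2) (h1 : 0 ≤ μ ⟨1, hn⟩) :
    d / 2 ≤ (1 + μ ⟨1, hn⟩) * |μ ⟨n - 1, by omega⟩| := by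
  set a := μ ⟨1, hn⟩
  set b := |μ ⟨n - 1, by omega⟩|
  set m := μ ⟨0, by omega⟩
  have hbound : ∀ i ∈ univ.erase (⟨0, by omega⟩ : Fin n), μ i ∈ Set.Icc (-b) a := by
    intro i hi
    have hi0 : i.val ≠ 0 := Fin.val_ne_iff.2 (ne_of_mem_erase hi)
    exact ⟨(neg_abs_le _).trans (hμ (Fin.le_def.2 (show i.val ≤ n - 1 by omega))),
      hμ (Fin.mk_le_of_le_val (by omega))⟩
  have hrest := sum_sq_le_of_forall_mem_Icc _ _ hbound
  rw [← add_sum_erase _ _ (mem_univ (⟨0, by omega⟩ : Fin n))] at hsum hsq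
  rw [card_erase_of_mem (mem_univ _), card_univ, Fintype.card_fin,
    Nat.cast_sub (by omega : 1 ≤ n), Nat.cast_one] at hrest
  have hm : 0 ≤ m := h1.trans (hμ (Fin.mk_le_mk.2 zero_le_one))
  have hb : 0 ≤ b := abs_nonneg _
  have hn0 : (0 : ℝ) < n := by positivity
  have hnd : n * d ≤ d * d + d * b + n * (a * b) := by
    nlinarith [mul_le_mul hmax hmax hm (hm.trans hmax), mul_le_mul_of_nonneg_left hmax hb,
      mul_nonneg h1 hm, mul_nonneg h1 hb]
  have hdd : d * d ≤ n / 2 * d := mul_le_mul_of_nonneg_right hdn (hm.trans hmax)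
  have hdb : d * b ≤ n * b := mul_le_mul_of_nonneg_right (by linarith) hb
  have hscaled : n * (d / 2) ≤ n * ((1 + a) * b) := by linarith
  exact le_of_mul_le_mul_left hscaled hn0

/-- Let `G` be a `d`-regular simple graph on `n ≥ 2` vertices with
`1 ≤ d ≤ n/2`, and suppose the adjacency-matrix eigenvalues, listed in decreasing
order as `μ`, satisfy `0 ≤ λ₂ ≤ √d / 2` where `λ₂ = μ 1`. Then, with `λₙ = μ (n-1)`
the smallest eigenvalue, `(1 + λ₂) · |λₙ| ≥ d/4`. -/
theorem stmt_10 (n d : ℕ) (hn : 2 ≤ n)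
    (G : SimpleGraph (Fin n)) [DecidableRel G.Adj]
    (hreg : G.IsRegularOfDegree d)
    (hA : (G.adjMatrix ℝ).IsHermitian)
    (μ : Fin n → ℝ) (hμ : Antitone μ)
    (hperm : ∃ σ : Equiv.Perm (Fin n), μ = hA.eigenvalues ∘ σ)
    (hd2 : (d : ℝ) ≤ (n : ℝ) / 2)
    (hmu2_nonneg : 0 ≤ μ ⟨1, by omega⟩) :
    (1 + μ ⟨1, by omega⟩) * |μ ⟨n - 1, by omega⟩| ≥ (d : ℝ) / 4 := by
  obtain ⟨σ, rfl⟩ := hperm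
  have hsum : ∑ i, (hA.eigenvalues ∘ σ) i = 0 := by
    rw [Function.comp_def, Equiv.sum_comp σ hA.eigenvalues]
    simpa using hA.trace_eq_sum_eigenvalues.symm.trans (G.trace_adjMatrix (α := ℝ))
  have hsq : ∑ i, (hA.eigenvalues ∘ σ) i ^ 2 = n * d := by
    rw [Function.comp_def, Equiv.sum_comp σ (hA.eigenvalues · ^ 2)]
    simpa using hA.trace_mul_self_eq_sum_eigenvalues_sq.symm.trans hreg.trace_adjMatrix_mul_self
  have hmax : hA.eigenvalues (σ ⟨0, by omega⟩) ≤ d :=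
    (le_abs_self _).trans <| (G.abs_eigenvalues_adjMatrix_le_maxDegree hA _).trans <|
      mod_cast G.maxDegree_le_of_forall_degree_le d fun v ↦ (hreg v).le
  have := hμ.half_le_one_add_mul_abs_of_sum_eq_zero (by omega) hsum hsq hmax hd2 hmu2_nonneg
  linarith [(Nat.cast_nonneg d : (0 : ℝ) ≤ d)]
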